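/- A *-ring R is a generalized p.q.-Baer *-ring if and only if R is a weakly generalized p.q.-Baer *-ring with a unity element. -/
import Mathlib


variable {R : Type*} [NonUnitalRing R] [StarRing R]

/-- A projection in a `*`-ring: a self-adjoint idempotent. -/
def IsProj (e : R) : Prop := e * e = e ∧ star e = e

/-- A central element. -/
def IsCentral (e : R) : Prop := ∀ r : R, e * r = r * e

/-- The order on projections: `e ≤ f` iff `e = e * f`. -/
def projLE (e f : R) : Prop := e * f = e

/-- `npow1 x n = x ^ (n + 1)` in a possibly non-unital ring. -/
def npow1 (x : R) : ℕ → R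
  | 0 => x
  | n + 1 => npow1 x n * x

/-- `chain x n f = (x * f 0) * (x * f 1) * ⋯ * (x * f n)`, a typical generator of `(xR)^(n+1)`. -/
def chain (x : R) : ℕ → (ℕ → R) → R
  | 0, f => x * f 0
  | n + 1, f => chain x n f * (x * f (n + 1))

/-- A weakly generalized p.q.-Baer `*`-ring: for every `x` there are a central projection `e`
and `n ≥ 1` with `x ^ n * e = x ^ n` and, for all `y`, `(xR)^n y = 0` iff `e * y = 0`. -/
def IsWeaklyGenPQBaerStar (S : Type*) [NonUnitalRing S] [StarRing S] : Prop :=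
  ∀ x : S, ∃ (e : S) (n : ℕ), IsProj e ∧ IsCentral e ∧ npow1 x n * e = npow1 x n ∧
    ∀ y : S, (∀ f : ℕ → S, chain x n f * y = 0) ↔ e * y = 0

/-- A generalized p.q.-Baer `*`-ring (with unity) in the non-unital language. -/
def IsGenPQBaerStarNU (S : Type*) [NonUnitalRing S] [StarRing S] : Prop :=
  (∃ u : S, ∀ r : S, u * r = r ∧ r * u = r) ∧
    ∀ x : S, ∃ (n : ℕ) (e : S), IsProj e ∧
      {a : S | ∀ f : ℕ → S, chain x n f * a = 0} = {y : S | ∃ r : S, y = e * r}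

omit [StarRing R] in
theorem chain_congr (x : R) :
    ∀ (n : ℕ) (f g : ℕ → R), (∀ i, i ≤ n → f i = g i) → chain x n f = chain x n g
  | 0, f, g, h => by simp [chain, h 0 (le_refl 0)]
  | n+1, f, g, h => by
    simp only [chain]
    rw [chain_congr x n f g (fun i hi => h i (le_trans hi (Nat.le_succ n))), h (n+1) le_rfl]

omit [StarRing R] in
theorem chain_mul_right (x : R) (n : ℕ) (f : ℕ → R) (r : R) :
    chain x n f * r = chain x n (fun i => if i = n then f n * r else f i) := by
  induction n with
  | zero => simp [chain, mul_assoc]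
  | succ n ih =>
    have hg : chain x n (fun i => if i = n + 1 then f (n+1) * r else f i) = chain x n f :=
      chain_congr x n _ f (fun i hi => by
        simp [Nat.ne_of_lt (Nat.lt_succ_of_le hi)])
    simp only [chain, hg]
    simp [mul_assoc]

omit [StarRing R] in
theorem chain_const (x u : R) (hu : ∀ r : R, u * r = r ∧ r * u = r) :
    ∀ n : ℕ, chain x n (fun _ => u) = npow1 x n
  | 0 => by simp [chain, npow1, (hu x).2]
  | n+1 => by
    simp only [chain, npow1, chain_const x u hu n, (hu x).2]

theorem star_unit (u : R) (hu : ∀ r : R, u * r = r ∧ r * u = r) : star u = u := by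
  have h1 : ∀ r : R, star u * r = r := fun r => by
    have : star (star r * u) = star u * r := by simp [star_mul]
    rw [← this, (hu (star r)).2, star_star]
  calc star u = star u * u := ((hu (star u)).2).symm
    _ = u := h1 u

/-- generalized p.q.-Baer iff weakly generalized p.q.-Baer with unity. -/
theorem stmt5 :
    IsGenPQBaerStarNU R ↔
      (IsWeaklyGenPQBaerStar R ∧ ∃ u : R, ∀ r : R, u * r = r ∧ r * u = r) := by
  constructor
  · rintro ⟨⟨u, hu⟩, h⟩
    refine ⟨?_, ⟨u, hu⟩⟩
    intro x
    obtain ⟨n, e, ⟨hee, hse⟩, hset⟩ := h x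
    -- e is in the annihilator set
    have heA : ∀ f : ℕ → R, chain x n f * e = 0 := by
      rw [Set.ext_iff] at hset
      exact (hset e).2 ⟨e, hee.symm⟩
    have hA : ∀ y : R, (∀ f : ℕ → R, chain x n f * y = 0) ↔ ∃ r : R, y = e * r := by
      intro y; exact Set.ext_iff.1 hset y
    -- annihilator is a left ideal
    have hleft : ∀ y r : R, (∀ f : ℕ → R, chain x n f * y = 0) →
        (∀ f : ℕ → R, chain x n f * (r * y) = 0) := by
      intro y r hy f
      rw [← mul_assoc, chain_mul_right]
      exact hy _
    -- eR absorbs left multiplication, hence e r e = r e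
    have here : ∀ r : R, e * (r * e) = r * e := by
      intro r
      obtain ⟨s, hs⟩ := (hA (r * e)).1 (hleft e r ((hA e).2 ⟨e, hee.symm⟩))
      rw [hs, ← mul_assoc, hee]
    -- star trick gives e r e = e r
    have here' : ∀ r : R, e * (r * e) = e * r := by
      intro r
      have := here (star r)
      have h2 := congrArg star this
      simpa [star_mul, hse, mul_assoc] using h2
    have hcent : IsCentral e := fun r => by rw [← here' r, here r]
    refine ⟨u - e, n, ⟨?_, ?_⟩, ?_, ?_, ?_⟩
    · rw [mul_sub, sub_mul, sub_mul, (hu u).1, (hu e).1, (hu e).2, hee]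
      abel
    · rw [star_sub, hse, star_unit u hu]
    · intro r
      rw [sub_mul, mul_sub, (hu r).1, (hu r).2, hcent r]
    · have hxe : npow1 x n * e = 0 := by
        rw [← chain_const x u hu n]; exact heA _
      rw [mul_sub, (hu (npow1 x n)).2, hxe, sub_zero]
    · intro y
      constructor
      · intro hy
        obtain ⟨r, hr⟩ := (hA y).1 hy
        have : e * y = y := by rw [hr, ← mul_assoc, hee]
        rw [sub_mul, (hu y).1, this, sub_self]
      · intro hy
        have hey : e * y = y := by
          have := hy
          rw [sub_mul, (hu y).1, sub_eq_zero] at this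
          exact this.symm
        exact (hA y).2 ⟨y, hey.symm⟩
  · rintro ⟨h, ⟨u, hu⟩⟩
    refine ⟨⟨u, hu⟩, ?_⟩
    intro x
    obtain ⟨e, n, ⟨hee, hse⟩, hcent, _, hiff⟩ := h x
    refine ⟨n, u - e, ⟨?_, ?_⟩, ?_⟩
    · rw [mul_sub, sub_mul, sub_mul, (hu u).1, (hu e).1, (hu e).2, hee]
      abel
    · rw [star_sub, hse, star_unit u hu]
    · ext y
      simp only [Set.mem_setOf_eq]
      rw [hiff y]
      constructor
      · intro hy
        exact ⟨y, by rw [sub_mul, (hu y).1, hy, sub_zero]⟩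
      · rintro ⟨r, hr⟩
        rw [hr, ← mul_assoc, mul_sub, (hu e).2, hee, sub_self, zero_mul]
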